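/- arXiv:1707.06903 — 9 statements merged into one kernel-verified Lean document; each statement's English description precedes it below -/
import Mathlib

section
/- Suppose the bipartite object-feature graph associated to W is connected (i.e., for any two objects i, j there is a path i = i_0, i_1, ..., i_k = j such that consecutive objects share a common feature with positive weight). If G^{(1)} = P^{-1} W Q^{-1} W^T is symmetric, then all row sums p_{ii} of W are equal. -/
open BigOperators

theorem Finset.sum_div_pos_of_sum_pos {ι 𝕜 : Type*} [Fintype ι] [Field 𝕜] [LinearOrder 𝕜]
    [IsStrictOrderedRing 𝕜] {f g : ι → 𝕜} (hf : ∀ s, 0 ≤ f s) (hg : ∀ s, 0 < g s)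
    (h : 0 < ∑ s, f s) : 0 < ∑ s, f s / g s := by
  obtain ⟨s₀, -, hs₀⟩ := Finset.exists_lt_of_sum_lt (by simpa using h : ∑ _ : ι, (0 : 𝕜) < ∑ s, f s)
  exact Finset.sum_pos' (fun s _ => div_nonneg (hf s) (hg s).le)
    ⟨s₀, Finset.mem_univ _, div_pos hs₀ (hg s₀)⟩

/-- The symmetry of `G⁽¹⁾` at `(a, b)` reads `p_a⁻¹ S = p_b⁻¹ S` with `S = ∑ s, w_as w_bs / q_s`,
and `S > 0` because `a` and `b` share a feature. -/
theorem row_sum_eq_of_shares_feature {n m : ℕ} (W : Matrix (Fin n) (Fin m) ℝ)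
    (hW : ∀ i j, 0 ≤ W i j) (hq : ∀ j, 0 < ∑ i, W i j)
    {a b : Fin n} (hab : 0 < ∑ s, W a s * W b s)
    (hsym : (∑ s, W a s)⁻¹ * ∑ s, W a s * W b s / (∑ l, W l s) =
      (∑ s, W b s)⁻¹ * ∑ s, W b s * W a s / (∑ l, W l s)) :
    ∑ s, W a s = ∑ s, W b s := by
  have hS : 0 < ∑ s, W a s * W b s / (∑ l, W l s) :=
    Finset.sum_div_pos_of_sum_pos (fun s => mul_nonneg (hW a s) (hW b s)) hq hab
  simp only [mul_comm (W b _) (W a _)] at hsym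
  exact inv_inj.mp (mul_right_cancel₀ hS.ne' hsym)

theorem equal_row_sums_of_symmetric_connected_general {n m : ℕ} (W : Matrix (Fin n) (Fin m) ℝ)
    (hW : ∀ i j, 0 ≤ W i j)
    (hq : ∀ j, 0 < ∑ i, W i j)
    (hconn : ∀ i j : Fin n,
      Relation.ReflTransGen (fun a b => 0 < ∑ s, W a s * W b s) i j)
    (hsym : ∀ i j : Fin n,
      (∑ s, W i s)⁻¹ * ∑ s, W i s * W j s / (∑ l, W l s) =
      (∑ s, W j s)⁻¹ * ∑ s, W j s * W i s / (∑ l, W l s)) :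
    ∀ i j : Fin n, ∑ s, W i s = ∑ s, W j s := by
  intro i j
  have h := (hconn i j).lift (fun a => ∑ s, W a s)
    fun a b hab => row_sum_eq_of_shares_feature W hW hq hab (hsym a b)
  rwa [Relation.reflTransGen_eq_self] at h

theorem equal_row_sums_of_symmetric_connected {n m : ℕ} (W : Matrix (Fin n) (Fin m) ℝ)
    (hW : ∀ i j, 0 ≤ W i j)
    (hp : ∀ i, 0 < ∑ s, W i s)
    (hq : ∀ j, 0 < ∑ i, W i j)
    (hconn : ∀ i j : Fin n,
      Relation.ReflTransGen (fun a b => 0 < ∑ s, W a s * W b s) i j)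
    (hsym : ∀ i j : Fin n,
      (∑ s, W i s)⁻¹ * ∑ s, W i s * W j s / (∑ l, W l s) =
      (∑ s, W j s)⁻¹ * ∑ s, W j s * W i s / (∑ l, W l s)) :
    ∀ i j : Fin n, ∑ s, W i s = ∑ s, W j s :=
  equal_row_sums_of_symmetric_connected_general W hW hq hconn hsym
end

section
/- Let W be a row-stochastic n×m matrix with column-sum diagonal matrix Q (entries q_{kk} = Σ_i w_{ik}, assumed positive). Define D := 𝟏𝟏^T − W Q^{-1} W^T. Then D is symmetric and satisfies the triangle inequality: d_{ij} + d_{jk} ≥ d_{ik} for all i, j, k. -/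
/-!
Write `d i j = 1 - a i j` with `a i j = ∑ c, W i c * W j c / q c`. Since row `j` sums to one,
`d i j + d j k - d i k = ∑ c, (W j c * q c - W i c * W j c - W j c * W k c + W i c * W k c) / q c`,
and each numerator is nonnegative because the column sum `q c` dominates `W i c + W k c`
when `i ≠ k`, `W i c + W j c` when `i = k ≠ j`, and `W i c` when `i = j = k`.
-/

open BigOperators Finset

section ColumnBound

variable {ι : Type*} [Fintype ι] {x : ι → ℝ}

theorem add_le_sum_of_ne (hx : ∀ l, 0 ≤ x l) {i k : ι} (hik : i ≠ k) :
    x i + x k ≤ ∑ l, x l := by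
  classical
  rw [← sum_pair hik]
  exact sum_le_sum_of_subset_of_nonneg (subset_univ _) fun l _ _ => hx l

theorem mul_add_mul_sub_mul_le_mul_sum (hx : ∀ l, 0 ≤ x l) (i j k : ι) :
    x i * x j + x j * x k - x i * x k ≤ x j * ∑ l, x l := by
  obtain rfl | hik := eq_or_ne i k
  · obtain rfl | hij := eq_or_ne i j
    · have hle : x i ≤ ∑ l, x l := single_le_sum (fun l _ => hx l) (mem_univ i)
      nlinarith [hx i]
    · have hle := add_le_sum_of_ne hx hij
      nlinarith [hx j, sq_nonneg (x i - x j), mul_nonneg (hx i) (hx j)]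
  · have hle := add_le_sum_of_ne hx hik
    nlinarith [hx j, mul_nonneg (hx i) (hx k)]

theorem mul_add_mul_sub_mul_div_sum_le (hx : ∀ l, 0 ≤ x l) (i j k : ι) :
    (x i * x j + x j * x k - x i * x k) / ∑ l, x l ≤ x j :=
  div_le_of_le_mul₀ (sum_nonneg fun l _ => hx l) (hx j) (mul_add_mul_sub_mul_le_mul_sum hx i j k)

end ColumnBound

section Affinity

variable {ι κ : Type*} [Fintype ι] [Fintype κ]

/-- The entries of `W Q⁻¹ Wᵀ`, where `Q` is the diagonal matrix of column sums of `W`. -/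
noncomputable def affinity (W : Matrix ι κ ℝ) (i j : ι) : ℝ :=
  ∑ c, W i c * W j c / ∑ l, W l c

theorem affinity_comm (W : Matrix ι κ ℝ) (i j : ι) : affinity W i j = affinity W j i := by
  simp only [affinity, mul_comm (W i _)]

theorem affinity_add_affinity_sub_affinity_le_sum {W : Matrix ι κ ℝ} (hW : ∀ i c, 0 ≤ W i c)
    (i j k : ι) : affinity W i j + affinity W j k - affinity W i k ≤ ∑ c, W j c :=
  calc affinity W i j + affinity W j k - affinity W i k
      = ∑ c, (W i c * W j c + W j c * W k c - W i c * W k c) / ∑ l, W l c := by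
        simp only [affinity, ← sum_add_distrib, ← sum_sub_distrib, add_div, sub_div]
    _ ≤ ∑ c, W j c :=
        sum_le_sum fun c _ => mul_add_mul_sub_mul_div_sum_le (fun l => hW l c) i j k

end Affinity

theorem D_symmetric_and_triangle_general {n m : ℕ} (W : Matrix (Fin n) (Fin m) ℝ)
    (hW : ∀ i j, 0 ≤ W i j)
    (hrow : ∀ i, ∑ k, W i k = 1) :
    ∀ d : Fin n → Fin n → ℝ,
      (∀ i j, d i j = 1 - ∑ k, W i k * W j k / (∑ l, W l k)) →
      (∀ i j, d i j = d j i) ∧ (∀ i j k, d i j + d j k ≥ d i k) := by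
  intro d hd
  have hd' : ∀ i j, d i j = 1 - affinity W i j := hd
  refine ⟨fun i j => by rw [hd', hd', affinity_comm], fun i j k => ?_⟩
  have htri := affinity_add_affinity_sub_affinity_le_sum hW i j k
  rw [hrow] at htri
  rw [hd', hd', hd']
  linarith

theorem D_symmetric_and_triangle {n m : ℕ} (W : Matrix (Fin n) (Fin m) ℝ)
    (hW : ∀ i j, 0 ≤ W i j)
    (hrow : ∀ i, ∑ k, W i k = 1)
    (hq : ∀ k, 0 < ∑ i, W i k) :
    ∀ d : Fin n → Fin n → ℝ,
      (∀ i j, d i j = 1 - ∑ k, W i k * W j k / (∑ l, W l k)) →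
      (∀ i j, d i j = d j i) ∧ (∀ i j k, d i j + d j k ≥ d i k) :=
  D_symmetric_and_triangle_general W hW hrow
end

section
/- For any three rows of a row-stochastic nonnegative matrix W with positive column sums q_{kk} ≥ w_{1k} + w_{2k} + w_{3k}, we have Σ_k [(w_{1k} + w_{3k}) w_{2k} − w_{1k} w_{3k}] / q_{kk} ≤ 2/3 < 1. -/
/-! Each summand is bounded by the affine function `4/9 · w_b + 1/9 · (w_a + w_c)` of the column,
because `9 s t ≤ (s + t)(s + 4t)` is `(s - 2t)² ≥ 0`. Summing over the columns and using that the
three rows are stochastic gives `4/9 + 2/9 = 2/3`. -/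

open BigOperators

theorem div_le_affine_of_add_add_le {x y z q : ℝ} (hx : 0 ≤ x) (hy : 0 ≤ y) (hz : 0 ≤ z)
    (hq : x + y + z ≤ q) :
    ((x + z) * y - x * z) / q ≤ 4 / 9 * y + 1 / 9 * (x + z) := by
  rcases (show 0 ≤ q by linarith).eq_or_lt with rfl | hq_pos
  · rw [div_zero]
    positivity
  rw [div_le_iff₀ hq_pos]
  have hslack : 0 ≤ (q - (x + y + z)) * (4 / 9 * y + 1 / 9 * (x + z)) :=
    mul_nonneg (by linarith) (by positivity)
  nlinarith [sq_nonneg (x + z - 2 * y), mul_nonneg hx hz]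

theorem key_estimate_general {n m : ℕ} (W : Matrix (Fin n) (Fin m) ℝ)
    (a b c : Fin n)
    (hW : ∀ i j, 0 ≤ W i j)
    (ha : ∑ k, W a k = 1) (hb : ∑ k, W b k = 1) (hc : ∑ k, W c k = 1)
    (hq3 : ∀ k, W a k + W b k + W c k ≤ ∑ i, W i k) :
    (∑ k, ((W a k + W c k) * W b k - W a k * W c k) / (∑ i, W i k)) ≤ 2/3 ∧
      (2/3 : ℝ) < 1 := by
  refine ⟨?_, by norm_num⟩
  calc (∑ k, ((W a k + W c k) * W b k - W a k * W c k) / (∑ i, W i k))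
      ≤ ∑ k, (4 / 9 * W b k + 1 / 9 * (W a k + W c k)) :=
        Finset.sum_le_sum fun k _ =>
          div_le_affine_of_add_add_le (hW a k) (hW b k) (hW c k) (hq3 k)
    _ = 2 / 3 := by
        rw [Finset.sum_add_distrib, ← Finset.mul_sum, ← Finset.mul_sum, Finset.sum_add_distrib,
          ha, hb, hc]
        norm_num

theorem key_estimate {n m : ℕ} (W : Matrix (Fin n) (Fin m) ℝ)
    (a b c : Fin n)
    (hW : ∀ i j, 0 ≤ W i j)
    (ha : ∑ k, W a k = 1) (hb : ∑ k, W b k = 1) (hc : ∑ k, W c k = 1)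
    (hq : ∀ k, 0 < ∑ i, W i k)
    (hq3 : ∀ k, W a k + W b k + W c k ≤ ∑ i, W i k) :
    (∑ k, ((W a k + W c k) * W b k - W a k * W c k) / (∑ i, W i k)) ≤ 2/3 ∧
      (2/3 : ℝ) < 1 :=
  key_estimate_general W a b c hW ha hb hc hq3
end

section
/- For any row-stochastic matrix W with column-sum diagonal matrix Q (positive diagonal), and any positive integer r, the matrix D^{(r)} := 𝟏𝟏^T − (W Q^{-1} W^T)^r satisfies the triangle inequality d^{(r)}_{ij} + d^{(r)}_{jk} ≥ d^{(r)}_{ik} for all i, j, k. -/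
/-!
Write `G(V) = V Q_V⁻¹ Vᵀ`, where `Q_V` is the diagonal matrix of column sums of `V`. For a
nonnegative row-stochastic `V`, the triangle inequality `G i j + G j k ≤ 1 + G i k` holds column
by column: with `x = V(·, l)` and `q = ∑ x`, column `l` contributes `x_j (x_i + x_k - q) ≤ x_i x_k`,
whose left side is `≤ 0` when `i ≠ k`, and which for `i = k` follows from `2 x_i x_j ≤ x_i² + x_j²`
and `x_j ≤ q`. The powers of `S = G(W)` are again of this form: `S` is symmetric and doubly
stochastic, so `S^(2u) = G(S^u)`, and since left multiplication by the column-stochastic `S^u`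
does not change column sums, `S^(2u+1) = S^u S S^u = G(S^u W)`.
-/

open Matrix

section Column

variable {ι : Type*} [Fintype ι] {x : ι → ℝ}

lemma mul_inv_sum_mul_sum (hx : ∀ s, 0 ≤ x s) (j : ι) :
    x j * (∑ s, x s)⁻¹ * ∑ s, x s = x j := by
  by_cases h : ∑ s, x s = 0
  · simp [(Finset.sum_eq_zero_iff_of_nonneg fun s _ => hx s).1 h j (Finset.mem_univ j)]
  · field_simp

lemma mul_add_mul_le_mul_sum_add_mul (hx : ∀ s, 0 ≤ x s) (i j k : ι) :
    x i * x j + x j * x k ≤ x j * ∑ s, x s + x i * x k := by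
  have hj : x j ≤ ∑ s, x s := Finset.single_le_sum (fun s _ => hx s) (Finset.mem_univ j)
  classical
  by_cases hik : i = k
  · subst hik
    nlinarith [sq_nonneg (x i - x j), hx i, hx j]
  · have hik : x i + x k ≤ ∑ s, x s := by
      rw [← Finset.sum_pair hik]
      exact Finset.sum_le_univ_sum_of_nonneg hx
    nlinarith [hx i, hx j, hx k]

lemma mul_inv_sum_mul_triangle (hx : ∀ s, 0 ≤ x s) (i j k : ι) :
    x i * (∑ s, x s)⁻¹ * x j + x j * (∑ s, x s)⁻¹ * x k ≤
      x j + x i * (∑ s, x s)⁻¹ * x k := by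
  have hinv : 0 ≤ (∑ s, x s)⁻¹ := inv_nonneg.2 (Finset.sum_nonneg fun s _ => hx s)
  calc x i * (∑ s, x s)⁻¹ * x j + x j * (∑ s, x s)⁻¹ * x k
      = (x i * x j + x j * x k) * (∑ s, x s)⁻¹ := by ring
    _ ≤ (x j * ∑ s, x s + x i * x k) * (∑ s, x s)⁻¹ :=
      mul_le_mul_of_nonneg_right (mul_add_mul_le_mul_sum_add_mul hx i j k) hinv
    _ = x j * (∑ s, x s)⁻¹ * ∑ s, x s + x i * (∑ s, x s)⁻¹ * x k := by ring
    _ = x j + x i * (∑ s, x s)⁻¹ * x k := by rw [mul_inv_sum_mul_sum hx]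

end Column

section Product

variable {ι ι' κ : Type*} [Fintype ι] {D : Matrix ι' ι ℝ} {W : Matrix ι κ ℝ}

lemma mul_apply_nonneg (hD : ∀ i t, 0 ≤ D i t) (hW : ∀ t l, 0 ≤ W t l) (i : ι') (l : κ) :
    0 ≤ (D * W) i l :=
  Finset.sum_nonneg fun t _ => mul_nonneg (hD i t) (hW t l)

lemma sum_row_mul_eq_one [Fintype κ] (hD : ∀ i, ∑ t, D i t = 1) (hW : ∀ t, ∑ l, W t l = 1)
    (i : ι') : ∑ l, (D * W) i l = 1 := by
  simp only [mul_apply]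
  rw [Finset.sum_comm]
  simp [← Finset.mul_sum, hW, hD]

lemma sum_col_mul_of_sum_col_eq_one [Fintype ι'] (hD : ∀ t, ∑ s, D s t = 1) (l : κ) :
    ∑ s, (D * W) s l = ∑ t, W t l := by
  simp only [mul_apply]
  rw [Finset.sum_comm]
  simp [← Finset.sum_mul, hD]

end Product

section ColNormalizedGram

variable {ι ι' κ : Type*} [Fintype ι] [Fintype κ] [DecidableEq κ]

noncomputable def colNormalizedGram (W : Matrix ι κ ℝ) : Matrix ι ι ℝ :=
  W * diagonal (fun l => (∑ s, W s l)⁻¹) * Wᵀ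

variable {W : Matrix ι κ ℝ}

lemma colNormalizedGram_apply (a b : ι) :
    colNormalizedGram W a b = ∑ l, W a l * (∑ s, W s l)⁻¹ * W b l := by
  rw [colNormalizedGram, mul_apply]
  simp only [mul_diagonal, transpose_apply]

lemma colNormalizedGram_transpose : (colNormalizedGram W)ᵀ = colNormalizedGram W := by
  simp [colNormalizedGram, transpose_mul, Matrix.mul_assoc]

lemma colNormalizedGram_add_le (hW : ∀ i l, 0 ≤ W i l) (hrow : ∀ i, ∑ l, W i l = 1)
    (i j k : ι) :
    colNormalizedGram W i j + colNormalizedGram W j k ≤ 1 + colNormalizedGram W i k := by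
  simp only [colNormalizedGram_apply, ← hrow j, ← Finset.sum_add_distrib]
  exact Finset.sum_le_sum fun l _ => mul_inv_sum_mul_triangle (fun s => hW s l) i j k

lemma colNormalizedGram_mem_doublyStochastic [DecidableEq ι] (hW : ∀ i l, 0 ≤ W i l)
    (hrow : ∀ i, ∑ l, W i l = 1) : colNormalizedGram W ∈ doublyStochastic ℝ ι := by
  have hrow' : ∀ a, ∑ b, colNormalizedGram W a b = 1 := fun a => by
    simp only [colNormalizedGram_apply]
    rw [Finset.sum_comm]
    simp only [← Finset.mul_sum]
    rw [← hrow a]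
    exact Finset.sum_congr rfl fun l _ => mul_inv_sum_mul_sum (fun s => hW s l) a
  refine mem_doublyStochastic_iff_sum.2 ⟨fun a b => ?_, hrow', fun b => ?_⟩
  · rw [colNormalizedGram_apply]
    exact Finset.sum_nonneg fun l _ =>
      mul_nonneg (mul_nonneg (hW a l) (inv_nonneg.2 (Finset.sum_nonneg fun s _ => hW s l)))
        (hW b l)
  · conv_lhs => rw [← colNormalizedGram_transpose]
    exact hrow' b

lemma colNormalizedGram_mul_left [Fintype ι'] (D : Matrix ι' ι ℝ) (hD : ∀ t, ∑ s, D s t = 1) :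
    colNormalizedGram (D * W) = D * colNormalizedGram W * Dᵀ := by
  simp only [colNormalizedGram, sum_col_mul_of_sum_col_eq_one hD, transpose_mul,
    Matrix.mul_assoc]

lemma colNormalizedGram_of_sum_col_eq_one (hW : ∀ l, ∑ s, W s l = 1) :
    colNormalizedGram W = W * Wᵀ := by
  simp [colNormalizedGram, hW]

theorem colNormalizedGram_pow_add_le [DecidableEq ι] (hW : ∀ i l, 0 ≤ W i l)
    (hrow : ∀ i, ∑ l, W i l = 1) (r : ℕ) (i j k : ι) :
    (colNormalizedGram W ^ r) i j + (colNormalizedGram W ^ r) j k ≤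
      1 + (colNormalizedGram W ^ r) i k := by
  set S := colNormalizedGram W
  have hS (u : ℕ) : S ^ u ∈ doublyStochastic ℝ ι :=
    pow_mem (colNormalizedGram_mem_doublyStochastic hW hrow) u
  have hS_symm (u : ℕ) : (S ^ u)ᵀ = S ^ u := by rw [transpose_pow, colNormalizedGram_transpose]
  obtain ⟨u, rfl | rfl⟩ := Nat.even_or_odd' r
  · have hpow : S ^ (2 * u) = colNormalizedGram (S ^ u) := by
      rw [colNormalizedGram_of_sum_col_eq_one (sum_col_of_mem_doublyStochastic (hS u)), hS_symm,
        ← pow_add, two_mul]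
    rw [hpow]
    exact colNormalizedGram_add_le (fun _ _ => nonneg_of_mem_doublyStochastic (hS u))
      (sum_row_of_mem_doublyStochastic (hS u)) i j k
  · have hpow : S ^ (2 * u + 1) = colNormalizedGram (S ^ u * W) := by
      rw [colNormalizedGram_mul_left _ (sum_col_of_mem_doublyStochastic (hS u)), hS_symm,
        ← pow_succ, ← pow_add]
      ring_nf
    rw [hpow]
    exact colNormalizedGram_add_le
      (mul_apply_nonneg (fun _ _ => nonneg_of_mem_doublyStochastic (hS u)) hW)
      (sum_row_mul_eq_one (sum_row_of_mem_doublyStochastic (hS u)) hrow) i j k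

end ColNormalizedGram

theorem D_r_triangle_general {n m : ℕ} (W : Matrix (Fin n) (Fin m) ℝ)
    (hW : ∀ i j, 0 ≤ W i j)
    (hrow : ∀ i, ∑ k, W i k = 1) :
    ∀ r : ℕ, 1 ≤ r →
      ∀ i j k : Fin n,
        (1 - ((W * Matrix.diagonal (fun l => (∑ s, W s l)⁻¹) * Wᵀ) ^ r) i j) +
        (1 - ((W * Matrix.diagonal (fun l => (∑ s, W s l)⁻¹) * Wᵀ) ^ r) j k) ≥
        (1 - ((W * Matrix.diagonal (fun l => (∑ s, W s l)⁻¹) * Wᵀ) ^ r) i k) := by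
  intro r _ i j k
  have h := colNormalizedGram_pow_add_le hW hrow r i j k
  rw [colNormalizedGram] at h
  linarith

theorem D_r_triangle {n m : ℕ} (W : Matrix (Fin n) (Fin m) ℝ)
    (hW : ∀ i j, 0 ≤ W i j)
    (hrow : ∀ i, ∑ k, W i k = 1)
    (hq : ∀ k, 0 < ∑ i, W i k) :
    ∀ r : ℕ, 1 ≤ r →
      ∀ i j k : Fin n,
        (1 - ((W * Matrix.diagonal (fun l => (∑ s, W s l)⁻¹) * Wᵀ) ^ r) i j) +
        (1 - ((W * Matrix.diagonal (fun l => (∑ s, W s l)⁻¹) * Wᵀ) ^ r) j k) ≥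
        (1 - ((W * Matrix.diagonal (fun l => (∑ s, W s l)⁻¹) * Wᵀ) ^ r) i k) :=
  D_r_triangle_general W hW hrow
end

section
/- Let W be an n×m nonnegative matrix with row sums p_{ii} > 0 and column sums q_{kk} > 0, and let g^{(1)}(i,j) = (1/p_{ii}) Σ_s w_{is} w_{js} / q_{ss}. If min_i p_{ii} / max_i p_{ii} > 2/3, then the distance g_d^{(1)}(i,j) = 1 − g^{(1)}(i,j) satisfies the triangle inequality g_d^{(1)}(i,j) + g_d^{(1)}(j,k) ≥ g_d^{(1)}(i,k) for all i, j, k. -/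
/-!
Write `P_i` for the row sums and `S(i, j) = ∑ₛ w_{is} w_{js} / q_{ss}`, so `g(i, j) = S(i, j) / P_i`.
Any set `T` of rows weighs at most `q_{ss}` in column `s`, hence `∑_{k ∈ T} S(j, k) ≤ P_j`;
with Cauchy–Schwarz `S(i, j)² ≤ S(i, i) S(j, j)` this reduces everything to real inequalities.
For distinct `i, j, k` even `g(i, j) + g(j, k) ≤ 1`: if `6 S(j, j) < P_j` both terms are at most
`1/2`, and otherwise `S(j, i) + S(j, j) + S(j, k) ≤ P_j` absorbs the excess; the ratio bound
`2/3` is exactly what makes both estimates work at the threshold `6 S(j, j) = P_j`.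
For `i = k`, the bound `g(i, j) + g(j, i) ≤ 1 + g(i, i)` follows from AM–GM.
-/

open Finset

lemma mul_lt_of_lt_iInf_div_iSup {ι : Type*} [Finite ι] {f : ι → ℝ} (hf : ∀ i, 0 ≤ f i)
    {c : ℝ} (hc : 0 ≤ c) (h : c < (⨅ i, f i) / ⨆ i, f i) (x y : ι) : c * f y < f x := by
  have hle_sup : ∀ i, f i ≤ ⨆ i, f i := le_ciSup (Finite.bddAbove_range f)
  have hsup : 0 < ⨆ i, f i := by
    by_contra! hsup
    rw [le_antisymm hsup ((hf x).trans (hle_sup x)), div_zero] at h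
    linarith
  calc c * f y ≤ c * ⨆ i, f i := mul_le_mul_of_nonneg_left (hle_sup y) hc
    _ < ⨅ i, f i := (lt_div_iff₀ hsup).mp h
    _ ≤ f x := ciInf_le (Finite.bddBelow_range f) x

lemma mul_add_mul_le_mul_of_sum_le {P Q R x y B : ℝ} (hP : 0 < P)
    (hPQ : 2 * Q ≤ 3 * P) (hQR : 2 * R ≤ 3 * Q) (hx : 0 ≤ x) (hy : 0 ≤ y)
    (hxB : x ^ 2 ≤ P * B) (hyB : y ^ 2 ≤ B * R) (hsum : x + B + y ≤ Q) :
    Q * x + P * y ≤ P * Q := by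
  have hB : 0 ≤ B := nonneg_of_mul_nonneg_right (by nlinarith) hP
  have hQ : 0 ≤ Q := by linarith
  rcases le_or_gt Q (6 * B) with hlarge | hsmall
  · have hQx : Q * x ≤ 3 * (P * B) := by
      apply pow_le_pow_iff_left₀ (by positivity) (by positivity) two_ne_zero |>.mp
      nlinarith [mul_le_mul_of_nonneg_left hxB (sq_nonneg Q),
        mul_le_mul_of_nonneg_right (show Q ^ 2 ≤ 9 * (P * B) by nlinarith) (mul_nonneg hP.le hB)]
    -- `P y ≤ P (Q - B - x)`, and `(Q - P) x ≤ Q x / 3 ≤ P B`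
    nlinarith
  · have hx2 : x ≤ P / 2 := by nlinarith
    have hy2 : y ≤ Q / 2 := by nlinarith
    nlinarith

lemma mul_add_le_of_sum_le {P Q x A B : ℝ} (hP : 0 ≤ P) (hQP : Q ≤ 4 * P) (hA : 0 ≤ A)
    (hB : 0 ≤ B) (hx : 0 ≤ x) (hxAB : x ^ 2 ≤ A * B) (hsum : x + B ≤ Q) :
    (P + Q) * x ≤ P * Q + Q * A := by
  have hQ : 0 ≤ Q := by linarith
  have hQx : Q * x ≤ Q * A + P * B := by
    apply pow_le_pow_iff_left₀ (by positivity) (by positivity) two_ne_zero |>.mp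
    nlinarith [sq_nonneg (Q * A - P * B), mul_le_mul_of_nonneg_left hxAB (sq_nonneg Q),
      mul_nonneg (sub_nonneg.2 hQP) (mul_nonneg hQ (mul_nonneg hA hB))]
  nlinarith

namespace GraphDiffusion

variable {ι κ : Type*} [Fintype ι] [Fintype κ] (W : Matrix ι κ ℝ)

noncomputable def colNormInner (i j : ι) : ℝ := ∑ s, W i s * W j s / ∑ l, W l s

/-- The order-1 graph diffusion similarity `g⁽¹⁾(i, j)`. -/
noncomputable def sim (i j : ι) : ℝ := (∑ s, W i s)⁻¹ * colNormInner W i j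

variable {W}

lemma colNormInner_comm (i j : ι) : colNormInner W i j = colNormInner W j i := by
  simp only [colNormInner, mul_comm (W i _)]

lemma colNormInner_nonneg (hW : ∀ i s, 0 ≤ W i s) (i j : ι) : 0 ≤ colNormInner W i j :=
  sum_nonneg fun s _ => div_nonneg (mul_nonneg (hW i s) (hW j s)) (sum_nonneg fun l _ => hW l s)

lemma colNormInner_sq_le (hW : ∀ i s, 0 ≤ W i s) (i j : ι) :
    colNormInner W i j ^ 2 ≤ colNormInner W i i * colNormInner W j j :=
  sum_sq_le_sum_mul_sum_of_sq_le_mul _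
    (fun s _ => div_nonneg (mul_self_nonneg _) (sum_nonneg fun l _ => hW l s))
    (fun s _ => div_nonneg (mul_self_nonneg _) (sum_nonneg fun l _ => hW l s))
    (fun s _ => le_of_eq (by ring))

lemma sum_colNormInner_le (hW : ∀ i s, 0 ≤ W i s) (T : Finset ι) (j : ι) :
    ∑ k ∈ T, colNormInner W j k ≤ ∑ s, W j s := by
  simp only [colNormInner]
  rw [sum_comm]
  refine sum_le_sum fun s _ => ?_
  rw [← sum_div, ← mul_sum, mul_div_assoc]
  refine mul_le_of_le_one_right (hW j s) (div_le_one_of_le₀ ?_ (sum_nonneg fun l _ => hW l s))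
  exact sum_le_sum_of_subset_of_nonneg (subset_univ T) fun l _ _ => hW l s

lemma sim_nonneg (hW : ∀ i s, 0 ≤ W i s) (i j : ι) : 0 ≤ sim W i j :=
  mul_nonneg (inv_nonneg.2 (sum_nonneg fun s _ => hW i s)) (colNormInner_nonneg hW i j)

lemma sim_self_le_one (hW : ∀ i s, 0 ≤ W i s) (i : ι) : sim W i i ≤ 1 :=
  inv_mul_le_one_of_le₀ (by simpa using sum_colNormInner_le hW {i} i)
    (sum_nonneg fun s _ => hW i s)

lemma sim_add_sim_le_one (hW : ∀ i s, 0 ≤ W i s) (hpos : ∀ i, 0 < ∑ s, W i s)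
    (hcomp : ∀ i j, 2 * ∑ s, W i s ≤ 3 * ∑ s, W j s) {i j k : ι}
    (hij : i ≠ j) (hjk : j ≠ k) (hik : i ≠ k) : sim W i j + sim W j k ≤ 1 := by
  classical
  have hrow : colNormInner W j i + colNormInner W j j + colNormInner W j k ≤ ∑ s, W j s := by
    simpa [sum_insert, hij, hik, hjk, add_assoc] using sum_colNormInner_le hW {i, j, k} j
  have hxB : colNormInner W i j ^ 2 ≤ (∑ s, W i s) * colNormInner W j j :=
    (colNormInner_sq_le hW i j).trans (mul_le_mul_of_nonneg_right
      (by simpa using sum_colNormInner_le hW {i} i) (colNormInner_nonneg hW j j))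
  have hyB : colNormInner W j k ^ 2 ≤ colNormInner W j j * ∑ s, W k s :=
    (colNormInner_sq_le hW j k).trans (mul_le_mul_of_nonneg_left
      (by simpa using sum_colNormInner_le hW {k} k) (colNormInner_nonneg hW j j))
  have key := mul_add_mul_le_mul_of_sum_le (hpos i) (hcomp j i) (hcomp k j)
    (colNormInner_nonneg hW i j) (colNormInner_nonneg hW j k) hxB hyB
    (by rwa [colNormInner_comm i j])
  have hP := hpos i
  have hQ := hpos j
  rw [sim, sim]
  field_simp
  linarith

lemma sim_add_sim_swap_le (hW : ∀ i s, 0 ≤ W i s) (hpos : ∀ i, 0 < ∑ s, W i s)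
    (hcomp : ∀ i j, 2 * ∑ s, W i s ≤ 3 * ∑ s, W j s) {i j : ι} (hij : i ≠ j) :
    sim W i j + sim W j i ≤ 1 + sim W i i := by
  classical
  have hrow : colNormInner W j i + colNormInner W j j ≤ ∑ s, W j s := by
    simpa [sum_insert, hij] using sum_colNormInner_le hW {i, j} j
  have key := mul_add_le_of_sum_le (Q := ∑ s, W j s) (hpos i).le
    (by linarith [hcomp j i, hpos i])
    (colNormInner_nonneg hW i i) (colNormInner_nonneg hW j j) (colNormInner_nonneg hW i j)
    (colNormInner_sq_le hW i j) (by rwa [colNormInner_comm i j])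
  have hP := hpos i
  have hQ := hpos j
  rw [sim, sim, sim, colNormInner_comm j i]
  field_simp
  linarith

end GraphDiffusion

open GraphDiffusion in
theorem gd_triangle_of_comparable_row_sums_general {n m : ℕ} (W : Matrix (Fin n) (Fin m) ℝ)
    (hW : ∀ i j, 0 ≤ W i j)
    (hratio : (2 : ℝ) / 3 < (⨅ i, ∑ s, W i s) / (⨆ i, ∑ s, W i s)) :
    ∀ i j k : Fin n,
      (1 - (∑ s, W i s)⁻¹ * ∑ s, W i s * W j s / (∑ l, W l s)) +
      (1 - (∑ s, W j s)⁻¹ * ∑ s, W j s * W k s / (∑ l, W l s)) ≥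
      (1 - (∑ s, W i s)⁻¹ * ∑ s, W i s * W k s / (∑ l, W l s)) := by
  intro i j k
  have hlt : ∀ a b, 2 / 3 * ∑ s, W b s < ∑ s, W a s :=
    mul_lt_of_lt_iInf_div_iSup (fun a => sum_nonneg fun s _ => hW a s) (by norm_num) hratio
  have hpos : ∀ a, 0 < ∑ s, W a s := fun a =>
    (mul_nonneg (by norm_num) (sum_nonneg fun s _ => hW a s)).trans_lt (hlt a a)
  have hcomp : ∀ a b, 2 * ∑ s, W a s ≤ 3 * ∑ s, W b s := fun a b => by linarith [hlt b a]
  suffices sim W i j + sim W j k ≤ 1 + sim W i k by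
    simp only [sim, colNormInner] at this
    linarith
  by_cases hij : i = j
  · subst hij
    linarith [sim_self_le_one hW i]
  by_cases hjk : j = k
  · subst hjk
    linarith [sim_self_le_one hW j]
  by_cases hik : i = k
  · subst hik
    exact sim_add_sim_swap_le hW hpos hcomp hij
  linarith [sim_add_sim_le_one hW hpos hcomp hij hjk hik, sim_nonneg hW i k]

theorem gd_triangle_of_comparable_row_sums {n m : ℕ} (W : Matrix (Fin n) (Fin m) ℝ)
    (hW : ∀ i j, 0 ≤ W i j)
    (hp : ∀ i, 0 < ∑ s, W i s)
    (hq : ∀ s, 0 < ∑ i, W i s)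
    (hratio : (2 : ℝ) / 3 < (⨅ i, ∑ s, W i s) / (⨆ i, ∑ s, W i s)) :
    ∀ i j k : Fin n,
      (1 - (∑ s, W i s)⁻¹ * ∑ s, W i s * W j s / (∑ l, W l s)) +
      (1 - (∑ s, W j s)⁻¹ * ∑ s, W j s * W k s / (∑ l, W l s)) ≥
      (1 - (∑ s, W i s)⁻¹ * ∑ s, W i s * W k s / (∑ l, W l s)) :=
  gd_triangle_of_comparable_row_sums_general W hW hratio
end

section
/- The triangle inequality for g_d^{(1)} can fail without the row-sum condition: for the 3×2 matrix W = [[1,0],[2,6],[0,12]], one has g_d^{(1)}(1,2) + g_d^{(1)}(2,3) − g_d^{(1)}(1,3) = 1/3 + 1/2 − 1 < 0. -/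
open BigOperators

/-- The paper's `g⁽¹⁾(i, j) = p_ii⁻¹ ∑ₛ w_is w_js / q_ss`, with `p` the row sums and `q` the
column sums of `W`. -/
noncomputable def gOne {m n : Type*} [Fintype m] [Fintype n] (W : Matrix m n ℝ) (i j : m) : ℝ :=
  (∑ s, W i s)⁻¹ * ∑ s, W i s * W j s / ∑ l, W l s

section Counterexample

-- Row sums `1, 8, 12`, column sums `3, 18`: the row sums are not all equal.
local notation "W₀" => (!![1, 0; 2, 6; 0, 12] : Matrix (Fin 3) (Fin 2) ℝ)

theorem gOne_counterexample_zero_one : gOne W₀ 0 1 = 2 / 3 := by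
  norm_num [gOne, Fin.sum_univ_two, Fin.sum_univ_three, Matrix.cons_val_two]

theorem gOne_counterexample_one_two : gOne W₀ 1 2 = 1 / 2 := by
  norm_num [gOne, Fin.sum_univ_two, Fin.sum_univ_three, Matrix.cons_val_two]

theorem gOne_counterexample_zero_two : gOne W₀ 0 2 = 0 := by
  norm_num [gOne, Fin.sum_univ_two, Fin.sum_univ_three, Matrix.cons_val_two]

end Counterexample

theorem triangle_fails_counterexample :
    ∀ W : Matrix (Fin 3) (Fin 2) ℝ,
      W = !![1, 0; 2, 6; 0, 12] →
      ∀ gd : Fin 3 → Fin 3 → ℝ,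
        (∀ i j, gd i j = 1 - (∑ s, W i s)⁻¹ * ∑ s, W i s * W j s / (∑ l, W l s)) →
        gd 0 1 + gd 1 2 - gd 0 2 = 1/3 + 1/2 - 1 ∧ (1/3 + 1/2 - 1 : ℝ) < 0 := by
  rintro W rfl gd hgd
  have hgd_gOne : ∀ i j, gd i j = 1 - gOne !![1, 0; 2, 6; 0, 12] i j := hgd
  rw [hgd_gOne, hgd_gOne, hgd_gOne, gOne_counterexample_zero_one, gOne_counterexample_one_two,
    gOne_counterexample_zero_two]
  norm_num
end

section
/- If g_d^{(k)}(i,j) = 0 (i.e., (S^k)_{ij} = 1) for some k ≥ 1, then i = j and object i is isolated: every feature s with w_{is} > 0 satisfies w_{ls} = 0 for all l ≠ i. -/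
/-!
`S` is row-stochastic, so `(S ^ k) i j = 1` forces every other entry of row `i` of `S ^ k` to
vanish. On the other hand `S` has a positive diagonal, so a positive entry `S i l` stays
positive in every power `S ^ k`, `k ≥ 1`: a walk may wait at `l`. Applied to `l = i` this gives
`i = j`, and applied to `l ≠ i` sharing a feature `s` with `i` it contradicts the vanishing.
-/

open Matrix

namespace Matrix

section Stochastic

variable {n R : Type*} [Fintype n] [DecidableEq n]

theorem apply_eq_zero_of_mem_rowStochastic_of_apply_eq_one [Ring R] [PartialOrder R]
    [IsOrderedRing R] {M : Matrix n n R} (hM : M ∈ rowStochastic R n) {i j : n}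
    (hij : M i j = 1) {b : n} (hb : b ≠ j) : M i b = 0 := by
  have hrest : ∑ c ∈ Finset.univ.erase j, M i c = 0 := by
    have hsum := sum_row_of_mem_rowStochastic hM i
    rw [← Finset.add_sum_erase _ _ (Finset.mem_univ j), hij] at hsum
    exact add_eq_left.mp hsum
  exact (Finset.sum_eq_zero_iff_of_nonneg fun c _ => nonneg_of_mem_rowStochastic hM).mp hrest b
    (Finset.mem_erase.mpr ⟨hb, Finset.mem_univ b⟩)

theorem pow_apply_pos_of_apply_pos [Semiring R] [PartialOrder R] [IsStrictOrderedRing R]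
    {M : Matrix n n R} (hM : ∀ i j, 0 ≤ M i j) {a b : n} (hbb : 0 < M b b) (hab : 0 < M a b)
    {k : ℕ} (hk : 1 ≤ k) : 0 < (M ^ k) a b := by
  induction k, hk using Nat.le_induction with
  | base => simpa using hab
  | succ k _ ih =>
    calc 0 < (M ^ k) a b * M b b := mul_pos ih hbb
      _ ≤ (M ^ (k + 1)) a b := by
        rw [pow_succ, mul_apply]
        exact Finset.single_le_sum (fun c _ => mul_nonneg (pow_apply_nonneg hM k a c) (hM c b))
          (Finset.mem_univ b)

end Stochastic

section Similarity

variable {ι κ : Type*} [Fintype ι] [Fintype κ] [DecidableEq ι] [DecidableEq κ]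

noncomputable def similarity (W : Matrix ι κ ℝ) : Matrix ι ι ℝ :=
  diagonal (fun i => (∑ s, W i s)⁻¹) * W * diagonal (fun s => (∑ i, W i s)⁻¹) * Wᵀ

theorem similarity_apply (W : Matrix ι κ ℝ) (a b : ι) :
    similarity W a b = ∑ s, (∑ t, W a t)⁻¹ * W a s * (∑ l, W l s)⁻¹ * W b s := by
  rw [similarity, mul_apply]
  simp only [mul_diagonal, diagonal_mul, transpose_apply]

variable {W : Matrix ι κ ℝ} (hW : ∀ i s, 0 ≤ W i s)
include hW

theorem similarity_apply_pos (hp : ∀ i, 0 < ∑ s, W i s) (hq : ∀ s, 0 < ∑ i, W i s)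
    {a b : ι} {s : κ} (has : 0 < W a s) (hbs : 0 < W b s) : 0 < similarity W a b := by
  have hterm (t : κ) : 0 ≤ (∑ u, W a u)⁻¹ * W a t * (∑ l, W l t)⁻¹ * W b t := by
    have := hp a; have := hq t; have := hW a t; have := hW b t
    positivity
  rw [similarity_apply]
  refine lt_of_lt_of_le ?_ (Finset.single_le_sum (fun t _ => hterm t) (Finset.mem_univ s))
  have := hp a; have := hq s
  positivity

theorem similarity_apply_self_pos (hp : ∀ i, 0 < ∑ s, W i s) (hq : ∀ s, 0 < ∑ i, W i s)
    (a : ι) : 0 < similarity W a a := by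
  obtain ⟨s, -, hs⟩ := Finset.exists_ne_zero_of_sum_ne_zero (hp a).ne'
  have has : 0 < W a s := (hW a s).lt_of_ne' hs
  exact similarity_apply_pos hW hp hq has has

theorem similarity_mem_rowStochastic (hp : ∀ i, 0 < ∑ s, W i s)
    (hq : ∀ s, 0 < ∑ i, W i s) : similarity W ∈ rowStochastic ℝ ι := by
  refine mem_rowStochastic_iff_sum.mpr ⟨fun a b => ?_, fun a => ?_⟩
  · rw [similarity_apply]
    refine Finset.sum_nonneg fun s _ => ?_
    have := hp a; have := hq s; have := hW a s; have := hW b s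
    positivity
  · simp only [similarity_apply]
    rw [Finset.sum_comm]
    calc ∑ s, ∑ b, (∑ t, W a t)⁻¹ * W a s * (∑ l, W l s)⁻¹ * W b s
        = ∑ s, (∑ t, W a t)⁻¹ * W a s * ((∑ l, W l s)⁻¹ * ∑ b, W b s) := by
          simp only [Finset.mul_sum, mul_assoc]
      _ = 1 := by
          simp only [inv_mul_cancel₀ (hq _).ne', mul_one, ← Finset.mul_sum,
            inv_mul_cancel₀ (hp a).ne']

end Similarity

end Matrix

theorem isolated_of_gd_zero {n m : ℕ} (W : Matrix (Fin n) (Fin m) ℝ)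
    (hW : ∀ i j, 0 ≤ W i j)
    (hp : ∀ i, 0 < ∑ s, W i s)
    (hq : ∀ s, 0 < ∑ i, W i s)
    (k : ℕ) (hk : 1 ≤ k) (i j : Fin n)
    (h : ((Matrix.diagonal (fun i => (∑ s, W i s)⁻¹) * W *
        Matrix.diagonal (fun s => (∑ i, W i s)⁻¹) * Wᵀ) ^ k) i j = 1) :
    i = j ∧ ∀ s : Fin m, 0 < W i s → ∀ l : Fin n, l ≠ i → W l s = 0 := by
  change (similarity W ^ k) i j = 1 at h
  have hS := similarity_mem_rowStochastic hW hp hq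
  have hSnonneg : ∀ a b, 0 ≤ similarity W a b := fun _ _ => nonneg_of_mem_rowStochastic hS
  have hzero : ∀ b, b ≠ j → (similarity W ^ k) i b = 0 := fun _ =>
    apply_eq_zero_of_mem_rowStochastic_of_apply_eq_one (pow_mem hS k) h
  have hpow_pos {a b : Fin n} (hab : 0 < similarity W a b) : 0 < (similarity W ^ k) a b :=
    pow_apply_pos_of_apply_pos hSnonneg (similarity_apply_self_pos hW hp hq b) hab hk
  obtain rfl : i = j := by
    by_contra hij
    exact (hpow_pos (similarity_apply_self_pos hW hp hq i)).ne' (hzero i hij)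
  refine ⟨rfl, fun s his l hl => ?_⟩
  by_contra hls
  have hil := similarity_apply_pos hW hp hq his ((hW l s).lt_of_ne' hls)
  exact (hpow_pos hil).ne' (hzero l hl)
end

section
/- Normalized graph diffusion distance is a metametric: if W is row-stochastic (each object's feature vector sums to 1) with positive column sums, then n_d^{(k)}(i,j) := 1 − ((WQ^{-1}W^T)^k)_{ij} is nonnegative, symmetric, satisfies the triangle inequality, and n_d^{(k)}(i,j) = 0 implies i = j. -/
/-! The diffusion matrix `P = W Q⁻¹ Wᵀ` is positive semidefinite and row stochastic, and both
properties pass to `S = P ^ k`. Row stochasticity gives `S i j + S i l ≤ 1` for `j ≠ l`, which is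
the triangle inequality for `1 - S` when its endpoints differ; positive semidefiniteness gives
`2 S i j ≤ S i i + S j j ≤ S i i + 1`, which covers coinciding endpoints and, combined with the row
bound, rules out `S i j = 1` for `i ≠ j`. -/

open Matrix BigOperators

namespace Matrix

variable {R n m : Type*}

section PosSemidef

variable [CommRing R] [PartialOrder R] [StarRing R] [TrivialStar R] {M : Matrix n n R}

lemma PosSemidef.apply_comm (hM : M.PosSemidef) (i j : n) : M i j = M j i :=
  (isHermitian_iff_isSymm.mp hM.isHermitian).apply j i

lemma PosSemidef.two_mul_apply_le [IsOrderedRing R] (hM : M.PosSemidef) (i j : n) :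
    2 * M i j ≤ M i i + M j j := by
  -- the quadratic form at `eᵢ - eⱼ`
  have h := (hM.submatrix ![i, j]).dotProduct_mulVec_nonneg ![1, -1]
  simp [dotProduct, mulVec, Fin.sum_univ_two, hM.apply_comm j i] at h
  linear_combination h

lemma posSemidef_mul_diagonal_mul_transpose [Finite m] [Fintype n] [DecidableEq n]
    [StarOrderedRing R] {d : n → R} (hd : 0 ≤ d) (W : Matrix m n R) :
    (W * diagonal d * Wᵀ).PosSemidef := by
  simpa using (PosSemidef.diagonal hd).mul_mul_conjTranspose_same W

end PosSemidef

section RowStochastic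

variable [Fintype n] [DecidableEq n]

lemma apply_add_apply_le_one_of_mem_rowStochastic [Semiring R] [PartialOrder R] [IsOrderedRing R]
    {M : Matrix n n R} (hM : M ∈ rowStochastic R n) (i : n) {j l : n} (hjl : j ≠ l) :
    M i j + M i l ≤ 1 := by
  rw [← sum_row_of_mem_rowStochastic hM i, ← Finset.sum_pair hjl]
  exact Finset.sum_le_univ_sum_of_nonneg fun _ => nonneg_of_mem_rowStochastic hM

lemma mul_diagonal_inv_colSum_mul_transpose_mem_rowStochastic [Fintype m] [DecidableEq m]
    [Field R] [LinearOrder R] [IsStrictOrderedRing R] {W : Matrix n m R}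
    (hW : ∀ i k, 0 ≤ W i k) (hrow : ∀ i, ∑ k, W i k = 1) (hcol : ∀ k, ∑ i, W i k ≠ 0) :
    W * diagonal (fun k => (∑ i, W i k)⁻¹) * Wᵀ ∈ rowStochastic R n := by
  refine mem_rowStochastic.mpr ⟨fun i j => ?_, ?_⟩
  · rw [mul_apply]
    refine Finset.sum_nonneg fun k _ => mul_nonneg ?_ (hW j k)
    rw [mul_diagonal]
    exact mul_nonneg (hW i k) (inv_nonneg.mpr (Finset.sum_nonneg fun s _ => hW s k))
  · have hcolSum : Wᵀ *ᵥ 1 = fun k => ∑ i, W i k := by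
      ext k; simp [mulVec, dotProduct]
    have hdiagSum : diagonal (fun k => (∑ i, W i k)⁻¹) *ᵥ (fun k => ∑ i, W i k) = 1 := by
      ext k; rw [mulVec_diagonal, inv_mul_cancel₀ (hcol k)]; rfl
    have hrowSum : W *ᵥ 1 = 1 := by
      ext i; simp [mulVec, dotProduct, hrow]
    rw [← mulVec_mulVec, ← mulVec_mulVec, hcolSum, hdiagSum, hrowSum]

variable [CommRing R] [PartialOrder R] [StarRing R] [TrivialStar R] [IsOrderedRing R]
  {M : Matrix n n R}

theorem PosSemidef.apply_add_apply_le_one_add_apply (hM : M.PosSemidef)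
    (hS : M ∈ rowStochastic R n) (i j l : n) : M i j + M j l ≤ 1 + M i l := by
  rcases eq_or_ne i l with rfl | hil
  · have hdiag := hM.two_mul_apply_le i j
    have hjj : M j j ≤ 1 := le_one_of_mem_rowStochastic hS
    rw [hM.apply_comm j i]
    linear_combination hdiag + hjj
  · have hrow := apply_add_apply_le_one_of_mem_rowStochastic hS j hil
    have hil : 0 ≤ M i l := nonneg_of_mem_rowStochastic hS
    rw [← hM.apply_comm i j] at hrow
    linear_combination hrow + hil

theorem PosSemidef.eq_of_apply_eq_one [Nontrivial R] (hM : M.PosSemidef)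
    (hS : M ∈ rowStochastic R n) {i j : n} (hij : M i j = 1) : i = j := by
  by_contra hne
  have hrow := apply_add_apply_le_one_of_mem_rowStochastic hS i hne
  have hdiag := hM.two_mul_apply_le i j
  have hjj : M j j ≤ 1 := le_one_of_mem_rowStochastic hS
  have : (2 : R) ≤ 1 := by linear_combination hdiag + hrow + hjj - 3 * hij
  exact one_lt_two.not_ge this

end RowStochastic

end Matrix

theorem normalized_diffusion_metametric_general {n m : ℕ} (W : Matrix (Fin n) (Fin m) ℝ)
    (hW : ∀ i j, 0 ≤ W i j)
    (hrow : ∀ i, ∑ k, W i k = 1)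
    (hq : ∀ k, 0 < ∑ i, W i k)
    (k : ℕ) :
    ∀ nd : Fin n → Fin n → ℝ,
      (∀ i j, nd i j =
        1 - ((W * Matrix.diagonal (fun l => (∑ s, W s l)⁻¹) * Wᵀ) ^ k) i j) →
      (∀ i j, 0 ≤ nd i j) ∧
      (∀ i j, nd i j = nd j i) ∧
      (∀ i j l, nd i j + nd j l ≥ nd i l) ∧
      (∀ i j, nd i j = 0 → i = j) := by
  intro nd hnd
  set S := (W * diagonal (fun l => (∑ s, W s l)⁻¹) * Wᵀ) ^ k
  have hS : S ∈ rowStochastic ℝ (Fin n) := pow_mem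
    (mul_diagonal_inv_colSum_mul_transpose_mem_rowStochastic hW hrow fun l => (hq l).ne') k
  have hPSD : S.PosSemidef :=
    (posSemidef_mul_diagonal_mul_transpose (fun l => inv_nonneg.mpr (hq l).le) W).pow k
  simp only [hnd]
  refine ⟨fun i j => ?_, fun i j => ?_, fun i j l => ?_, fun i j h => ?_⟩
  · linarith [le_one_of_mem_rowStochastic hS (i := i) (j := j)]
  · rw [hPSD.apply_comm]
  · linarith [hPSD.apply_add_apply_le_one_add_apply hS i j l]
  · exact hPSD.eq_of_apply_eq_one hS (by linarith)

theorem normalized_diffusion_metametric {n m : ℕ} (W : Matrix (Fin n) (Fin m) ℝ)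
    (hW : ∀ i j, 0 ≤ W i j)
    (hrow : ∀ i, ∑ k, W i k = 1)
    (hq : ∀ k, 0 < ∑ i, W i k)
    (k : ℕ) (hk : 1 ≤ k) :
    ∀ nd : Fin n → Fin n → ℝ,
      (∀ i j, nd i j =
        1 - ((W * Matrix.diagonal (fun l => (∑ s, W s l)⁻¹) * Wᵀ) ^ k) i j) →
      (∀ i j, 0 ≤ nd i j) ∧
      (∀ i j, nd i j = nd j i) ∧
      (∀ i j l, nd i j + nd j l ≥ nd i l) ∧
      (∀ i j, nd i j = 0 → i = j) :=
  normalized_diffusion_metametric_general W hW hrow hq k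
end

section
/- For a row-stochastic nonnegative matrix W with positive column sums and three distinct rows 1, 2, 3, the quantity Σ_k (w_{1k}+w_{3k}) w_{2k} / (w_{1k}+w_{2k}+w_{3k}) (summing only over k with w_{1k}+w_{2k}+w_{3k} > 0) is at most 2/3. -/
open BigOperators Finset

section HarmonicBound

variable {K : Type*} [Field K] [LinearOrder K] [IsStrictOrderedRing K]

/-- The gap `(t²x + (1-t)²y)(x + y) - xy` is the square `(t x - (1-t) y)²`. -/
theorem mul_div_add_le_sq_mul_add_sq_mul {x y : K} (hx : 0 ≤ x) (hy : 0 ≤ y) (t : K) :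
    x * y / (x + y) ≤ t ^ 2 * x + (1 - t) ^ 2 * y := by
  rcases (add_nonneg hx hy).eq_or_lt with hxy | hxy
  · rw [← hxy, div_zero]
    positivity
  · rw [div_le_iff₀ hxy]
    nlinarith [sq_nonneg (t * x - (1 - t) * y)]

theorem sum_mul_div_add_le {ι : Type*} (s : Finset ι) {x y : ι → K}
    (hx : ∀ k ∈ s, 0 ≤ x k) (hy : ∀ k ∈ s, 0 ≤ y k) (t : K) :
    ∑ k ∈ s, x k * y k / (x k + y k) ≤ t ^ 2 * ∑ k ∈ s, x k + (1 - t) ^ 2 * ∑ k ∈ s, y k := by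
  rw [mul_sum, mul_sum, ← sum_add_distrib]
  exact sum_le_sum fun k hk => mul_div_add_le_sq_mul_add_sq_mul (hx k hk) (hy k hk) t

end HarmonicBound

theorem core_combinatorial_step_general {n m : ℕ} (W : Matrix (Fin n) (Fin m) ℝ)
    (a b c : Fin n)
    (hW : ∀ i j, 0 ≤ W i j)
    (ha : ∑ k, W a k = 1) (hb : ∑ k, W b k = 1) (hc : ∑ k, W c k = 1) :
    (∑ k ∈ Finset.univ.filter (fun k => 0 < W a k + W b k + W c k),
      (W a k + W c k) * W b k / (W a k + W b k + W c k)) ≤ 2/3 := by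
  have hx : ∀ k, 0 ≤ W a k + W c k := fun k => add_nonneg (hW a k) (hW c k)
  calc _ = ∑ k ∈ univ.filter (fun k => 0 < W a k + W b k + W c k),
          (W a k + W c k) * W b k / (W a k + W c k + W b k) :=
        sum_congr rfl fun k _ => by rw [add_right_comm]
    _ ≤ ∑ k, (W a k + W c k) * W b k / (W a k + W c k + W b k) :=
        sum_le_sum_of_subset_of_nonneg (filter_subset _ _) fun k _ _ =>
          div_nonneg (mul_nonneg (hx k) (hW b k)) (add_nonneg (hx k) (hW b k))
    _ ≤ (1 / 3) ^ 2 * ∑ k, (W a k + W c k) + (1 - 1 / 3) ^ 2 * ∑ k, W b k :=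
        sum_mul_div_add_le _ (fun k _ => hx k) (fun k _ => hW b k) _
    _ = 2 / 3 := by
      rw [sum_add_distrib, ha, hb, hc]
      norm_num

theorem core_combinatorial_step {n m : ℕ} (W : Matrix (Fin n) (Fin m) ℝ)
    (a b c : Fin n) (hab : a ≠ b) (hbc : b ≠ c) (hac : a ≠ c)
    (hW : ∀ i j, 0 ≤ W i j)
    (ha : ∑ k, W a k = 1) (hb : ∑ k, W b k = 1) (hc : ∑ k, W c k = 1)
    (hq : ∀ k, 0 < ∑ i, W i k) :
    (∑ k ∈ Finset.univ.filter (fun k => 0 < W a k + W b k + W c k),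
      (W a k + W c k) * W b k / (W a k + W b k + W c k)) ≤ 2/3 :=
  core_combinatorial_step_general W a b c hW ha hb hc
end
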